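/- arXiv:1008.4831 — 4 statements merged into one kernel-verified Lean document; each statement's English description precedes it below -/
import Mathlib

section
/- The binary operation x ⊙ y = ⌊x⌋ + y on ℝ is strictly increasing in its first argument, associative, but not commutative; hence there is no strictly increasing Θ : ℝ → ℝ with Θ(x ⊙ y) = Θ(x) + Θ(y). -/
/-! An additive representation `Θ (x ⊙ y) = Θ x + Θ y` by an injective `Θ` makes `⊙`
commutative, since `+` is. The operation `x ⊙ y = ⌊x⌋ + y` is not: `0 ⊙ ½ = ½` but `½ ⊙ 0 = 0`. -/

open Function

theorem comm_of_injective_of_map_op {α M : Type*} [AddCommMagma M] {op : α → α → α}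
    {Θ : α → M} (hΘ : Injective Θ) (hadd : ∀ x y, Θ (op x y) = Θ x + Θ y) (x y : α) :
    op x y = op y x :=
  hΘ (by rw [hadd, hadd, add_comm])

section FloorAdd

variable {α : Type*}

def floorAdd [Ring α] [LinearOrder α] [FloorRing α] (x y : α) : α := ⌊x⌋ + y

section Ring

variable [Ring α] [LinearOrder α] [IsStrictOrderedRing α] [FloorRing α]

theorem floorAdd_strictMono (z : α) : StrictMono (floorAdd z) :=
  strictMono_id.const_add _

theorem floorAdd_assoc (x y z : α) : floorAdd (floorAdd x y) z = floorAdd x (floorAdd y z) := by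
  simp only [floorAdd, Int.floor_intCast_add, Int.cast_add, add_assoc]

end Ring

theorem floorAdd_not_comm [Field α] [LinearOrder α] [IsStrictOrderedRing α] [FloorRing α] :
    ¬ ∀ x y : α, floorAdd x y = floorAdd y x := by
  intro h
  have hhalf : ⌊(1 / 2 : α)⌋ = 0 := Int.floor_eq_zero_iff.mpr ⟨by positivity, by norm_num⟩
  have := h 0 (1 / 2)
  simp only [floorAdd, Int.floor_zero, hhalf, Int.cast_zero, zero_add, add_zero] at this
  norm_num at this

end FloorAdd

/-- The operation `x ⊙ y = ⌊x⌋ + y` is strictly increasing in its first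
argument, associative, but not commutative; hence it admits no strictly
increasing additive regrade `Θ`. -/
theorem floor_add_counterexample (op : ℝ → ℝ → ℝ)
    (hop : ∀ x y : ℝ, op x y = (⌊x⌋ : ℝ) + y) :
    (∀ x y z : ℝ, x < y → op z x < op z y) ∧
    (∀ x y z : ℝ, op (op x y) z = op x (op y z)) ∧
    (¬ ∀ x y : ℝ, op x y = op y x) ∧
    ¬ ∃ Θ : ℝ → ℝ, StrictMono Θ ∧ ∀ x y : ℝ, Θ (op x y) = Θ x + Θ y := by
  obtain rfl : op = floorAdd := funext₂ hop
  refine ⟨fun x y z h => floorAdd_strictMono z h, floorAdd_assoc, floorAdd_not_comm, ?_⟩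
  rintro ⟨Θ, hΘ, hadd⟩
  exact floorAdd_not_comm (comm_of_injective_of_map_op hΘ.injective hadd)
end

section
/- The binary operation x ⊙ y = x + ⌊y⌋ on ℝ is strictly increasing in its second argument, associative, but not commutative. -/
theorem Int.cast_floor_add_cast_floor {α : Type*} [Ring α] [LinearOrder α] [IsStrictOrderedRing α]
    [FloorRing α] (y z : α) : ((⌊y + ⌊z⌋⌋ : ℤ) : α) = ⌊y⌋ + ⌊z⌋ := by
  rw [Int.floor_add_intCast, Int.cast_add]

/-- The operation `x ⊙ y = x + ⌊y⌋` is strictly increasing in its second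
argument... (per the paper: preserves order under postfix combination),
associative, but not commutative. -/
theorem add_floor_counterexample (op : ℝ → ℝ → ℝ)
    (hop : ∀ x y : ℝ, op x y = x + (⌊y⌋ : ℝ)) :
    (∀ x y z : ℝ, x < y → op x z < op y z) ∧
    (∀ x y z : ℝ, op (op x y) z = op x (op y z)) ∧
    ¬ ∀ x y : ℝ, op x y = op y x := by
  obtain rfl : op = fun x y => x + (⌊y⌋ : ℝ) := funext₂ hop
  refine ⟨fun x y z hxy => add_lt_add_left hxy _, fun x y z => ?_, fun hcomm => ?_⟩
  · show x + ⌊y⌋ + ⌊z⌋ = x + ⌊y + ⌊z⌋⌋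
    rw [Int.cast_floor_add_cast_floor, add_assoc]
  · have half_zero : (1 / 2 : ℝ) + ⌊(0 : ℝ)⌋ = 0 + ⌊(1 / 2 : ℝ)⌋ := hcomm (1 / 2) 0
    norm_num at half_zero
end

section
/- The binary operation x ⊙ y = x² + y² on ℝ is commutative, continuous, and strictly increasing in each argument on the positive reals, but not associative; moreover there exists no function Θ : ℝ≥0 → ℝ satisfying Θ(x² + y²) = Θ(x) + Θ(y) for all x, y > 0. -/
/-! An additive regrade `Θ` that is injective turns `⊙` into `+`, so it would force
`x ⊙ (y ⊙ z) = y ⊙ (x ⊙ z)`; but `√2 ⊙ (1 ⊙ 1) = 2 + 4 = 6` while `1 ⊙ (√2 ⊙ 1) = 1 + 9 = 10`. -/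

theorem left_comm_of_injOn_of_map_op {α β : Type*} [AddCommSemigroup β] {op : α → α → α}
    {Θ : α → β} {S : Set α} (hS : ∀ x ∈ S, ∀ y ∈ S, op x y ∈ S) (hΘ : Set.InjOn Θ S)
    (hmap : ∀ x ∈ S, ∀ y ∈ S, Θ (op x y) = Θ x + Θ y) {x y z : α}
    (hx : x ∈ S) (hy : y ∈ S) (hz : z ∈ S) : op x (op y z) = op y (op x z) :=
  hΘ (hS x hx _ (hS y hy z hz)) (hS y hy _ (hS x hx z hz)) <| by
    rw [hmap x hx _ (hS y hy z hz), hmap y hy _ (hS x hx z hz), hmap y hy z hz, hmap x hx z hz,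
      add_left_comm]

/-- The operation `x ⊙ y = x² + y²` is commutative, continuous, strictly
increasing in each argument on the positive reals, but not associative, and
admits no (order-preserving) regrade `Θ` with `Θ(x²+y²) = Θ(x)+Θ(y)` for
positive `x, y`. -/
theorem sq_add_sq_counterexample (op : ℝ → ℝ → ℝ)
    (hop : ∀ x y : ℝ, op x y = x ^ 2 + y ^ 2) :
    (∀ x y : ℝ, op x y = op y x) ∧
    Continuous (fun p : ℝ × ℝ => op p.1 p.2) ∧
    (∀ x y z : ℝ, 0 < x → x < y → 0 < z → op x z < op y z ∧ op z x < op z y) ∧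
    (¬ ∀ x y z : ℝ, op (op x y) z = op x (op y z)) ∧
    ¬ ∃ Θ : ℝ → ℝ, StrictMonoOn Θ (Set.Ioi 0) ∧
      ∀ x y : ℝ, 0 < x → 0 < y → Θ (x ^ 2 + y ^ 2) = Θ x + Θ y := by
  refine ⟨fun x y => by rw [hop, hop, add_comm], by simp only [hop]; fun_prop,
    fun x y z hx hxy _ => ?_, fun hassoc => ?_, ?_⟩
  · have hsq : x ^ 2 < y ^ 2 := pow_lt_pow_left₀ hxy hx.le two_ne_zero
    simp only [hop]
    constructor <;> linarith
  · have h := hassoc 1 1 0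
    norm_num [hop] at h
  · rintro ⟨Θ, hmono, hmap⟩
    have hpos : ∀ x ∈ Set.Ioi (0 : ℝ), ∀ y ∈ Set.Ioi (0 : ℝ), op x y ∈ Set.Ioi 0 :=
      fun x hx y hy => by
        rw [Set.mem_Ioi, hop]; exact add_pos (pow_pos hx 2) (pow_pos hy 2)
    have h := left_comm_of_injOn_of_map_op hpos hmono.injOn
      (fun x hx y hy => by rw [hop]; exact hmap x y hx hy)
      (Real.sqrt_pos.2 two_pos) (Set.mem_Ioi.2 one_pos) (Set.mem_Ioi.2 one_pos)
    norm_num [hop] at h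
end

section
/- Suppose Ψ : ℝ → ℝ is positive, and satisfies Ψ(τ + ξ) + Ψ(τ + η) = Ψ(τ + ζ(ξ,η)) for all real τ, ξ, η, where ζ : ℝ × ℝ → ℝ is some fixed function independent of τ. If additionally Ψ is continuous, then there exist constants A ∈ ℝ and C > 0 such that Ψ(x) = C·exp(A·x) for all x. -/
/-! Taking `ξ = 0`, the shift by `ζ 0 η` turns `Ψ(· + η)` into `Ψ + Ψ(· + η)`; starting from
`η = 0` this gives shifts `c`, `d` with `Ψ(· + c) = 2Ψ` and `Ψ(· + d) = 3Ψ`. With `A = log 2 / c`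
the function `P x = Ψ x · exp(-A x)` is continuous, positive and `c`-periodic, so it attains its
extrema; as `P(· + d)` is a constant multiple of `P`, that multiple is `1`, i.e. `A d = log 3`.
Thus `P` has the periods `c` and `d`, whose ratio `log 3 / log 2` is irrational since `2ᵐ ≠ 3ⁿ`.
The periods of a continuous function form a closed subgroup, here a dense one, so `P` is
constant. -/

open Real Function

theorem exists_add_eq_succ_mul {G R : Type*} [AddMonoid G] [NonAssocSemiring R] {Ψ : G → R}
    {ζ : G → G → G} (heq : ∀ τ ξ η : G, Ψ (τ + ξ) + Ψ (τ + η) = Ψ (τ + ζ ξ η)) (n : ℕ) :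
    ∃ s, ∀ τ, Ψ (τ + s) = (n + 1 : R) * Ψ τ := by
  induction n with
  | zero => exact ⟨0, fun τ => by simp⟩
  | succ n ih =>
    obtain ⟨s, hs⟩ := ih
    refine ⟨ζ 0 s, fun τ => ?_⟩
    rw [← heq, add_zero, hs, Nat.cast_succ, add_one_mul (_ + 1 : R), add_comm]

theorem mul_exp_neg_mul_add_of_add_eq_mul {Ψ : ℝ → ℝ} {s μ : ℝ} (h : ∀ τ, Ψ (τ + s) = μ * Ψ τ) (A x : ℝ) :
    Ψ (x + s) * exp (-(A * (x + s))) = μ * exp (-(A * s)) * (Ψ x * exp (-(A * x))) := by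
  rw [h, mul_add, neg_add, exp_add]
  ring

theorem Function.Periodic.eq_one_of_add_eq_mul {f : ℝ → ℝ} {c d μ : ℝ} (hper : Periodic f c)
    (hc : c ≠ 0) (hf : Continuous f) (hpos : ∀ x, 0 < f x) (hd : ∀ x, f (x + d) = μ * f x) :
    μ = 1 := by
  have hK := hper.compact_of_continuous hc hf
  obtain ⟨_, ⟨x₀, rfl⟩, hmax⟩ := hK.exists_isGreatest (Set.range_nonempty f)
  obtain ⟨_, ⟨x₁, rfl⟩, hmin⟩ := hK.exists_isLeast (Set.range_nonempty f)
  have hle : μ * f x₀ ≤ f x₀ := hd x₀ ▸ hmax ⟨x₀ + d, rfl⟩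
  have hge : f x₁ ≤ μ * f x₁ := hd x₁ ▸ hmin ⟨x₁ + d, rfl⟩
  have h₀ := hpos x₀
  have h₁ := hpos x₁
  apply le_antisymm
  · nlinarith
  · nlinarith

theorem Function.Periodic.eq_of_irrational_div {α : Type*} [TopologicalSpace α] [T2Space α]
    {f : ℝ → α} {a b : ℝ} (ha : Periodic f a) (hb : Periodic f b) (hab : Irrational (a / b))
    (hf : Continuous f) (x y : ℝ) : f x = f y := by
  have hclosed : IsClosed {p : ℝ | Periodic f p} := by
    simp only [Periodic, Set.ofPred_forall]
    exact isClosed_iInter fun x => isClosed_eq (by fun_prop) continuous_const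
  have hsub : (AddSubgroup.closure {a, b} : Set ℝ) ⊆ {p | Periodic f p} := by
    intro p hp
    induction hp using AddSubgroup.closure_induction with
    | mem p hp =>
      rcases hp with rfl | rfl
      · exact ha
      · exact hb
    | zero => exact fun x => by simp
    | add p q _ _ hp hq => exact hp.add_period hq
    | neg p _ hp => exact hp.neg
  have hall : Periodic f (y - x) :=
    hclosed.closure_subset_iff.mpr hsub (dense_addSubgroupClosure_pair_iff.mpr hab _)
  simpa using (hall x).symm

theorem irrational_log_three_div_log_two : Irrational (log 3 / log 2) := by
  rintro ⟨r, hr⟩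
  have hlog2 : 0 < log 2 := log_pos (by norm_num)
  have hr_pos : (0 : ℝ) < r := hr ▸ div_pos (log_pos (by norm_num)) hlog2
  obtain ⟨n, hn⟩ := Int.eq_ofNat_of_zero_le (Rat.num_pos.mpr (by exact_mod_cast hr_pos)).le
  have hlog : log ((3 : ℝ) ^ r.den) = log ((2 : ℝ) ^ n) := by
    have hr' : (r : ℝ) = n / r.den := by rw [Rat.cast_def, hn, Int.cast_natCast]
    have := hr'.symm.trans hr
    field_simp at this
    rw [log_pow, log_pow]
    linarith
  have hpow : 3 ^ r.den = 2 ^ n := by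
    exact_mod_cast log_injOn_pos (Set.mem_Ioi.mpr (by positivity))
      (Set.mem_Ioi.mpr (by positivity)) hlog
  have hn0 : n ≠ 0 := by
    rintro rfl
    simp at hpow
  have : Even (3 ^ r.den) := hpow ▸ (Nat.even_pow.mpr ⟨even_two, hn0⟩)
  norm_num [Nat.even_pow] at this

/-- Product theorem (with continuity): a positive continuous `Ψ` satisfying
`Ψ(τ+ξ) + Ψ(τ+η) = Ψ(τ+ζ(ξ,η))` for all `τ, ξ, η` (with `ζ` independent of
`τ`) must be of the form `Ψ(x) = C·exp(A·x)` with `C > 0`. -/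
theorem product_theorem (Ψ : ℝ → ℝ) (ζ : ℝ → ℝ → ℝ)
    (hpos : ∀ x, 0 < Ψ x)
    (heq : ∀ τ ξ η : ℝ, Ψ (τ + ξ) + Ψ (τ + η) = Ψ (τ + ζ ξ η))
    (hcont : Continuous Ψ) :
    ∃ A C : ℝ, 0 < C ∧ ∀ x : ℝ, Ψ x = C * Real.exp (A * x) := by
  obtain ⟨c, hc⟩ : ∃ c, ∀ τ, Ψ (τ + c) = 2 * Ψ τ := by
    simpa [one_add_one_eq_two] using exists_add_eq_succ_mul heq 1
  obtain ⟨d, hd⟩ : ∃ d, ∀ τ, Ψ (τ + d) = 3 * Ψ τ := by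
    simpa [show (2 + 1 : ℝ) = 3 by norm_num] using exists_add_eq_succ_mul heq 2
  have hc0 : c ≠ 0 := by
    rintro rfl
    linarith [add_zero (0 : ℝ) ▸ hc 0, hpos 0]
  set A := log 2 / c
  have hAc : A * c = log 2 := div_mul_cancel₀ _ hc0
  set P : ℝ → ℝ := fun x => Ψ x * exp (-(A * x))
  have hP : Continuous P := by fun_prop
  have hPc : Periodic P c := fun x => by
    simp only [P]
    rw [mul_exp_neg_mul_add_of_add_eq_mul hc, hAc, exp_neg, exp_log two_pos, mul_inv_cancel₀ two_ne_zero,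
      one_mul]
  have h3 : 3 * exp (-(A * d)) = 1 := hPc.eq_one_of_add_eq_mul hc0 hP
    (fun x => mul_pos (hpos x) (exp_pos _)) (mul_exp_neg_mul_add_of_add_eq_mul hd A)
  have hPd : Periodic P d := fun x => by
    simp only [P]
    rw [mul_exp_neg_mul_add_of_add_eq_mul hd, h3, one_mul]
  have hAd : A * d = log 3 := by
    rw [exp_neg, mul_inv_eq_one₀ (exp_pos _).ne'] at h3
    rw [h3, log_exp]
  have hA : A ≠ 0 := left_ne_zero_of_mul (hAc ▸ (log_pos one_lt_two).ne')
  have hirr : Irrational (d / c) := by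
    rw [← mul_div_mul_left d c hA, hAd, hAc]
    exact irrational_log_three_div_log_two
  refine ⟨A, Ψ 0, hpos 0, fun x => ?_⟩
  have hx : P x = Ψ 0 := by simpa [P] using hPd.eq_of_irrational_div hPc hirr hP x 0
  rw [← hx, mul_assoc, ← exp_add, neg_add_cancel, exp_zero, mul_one]
end
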